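/- arXiv:2009.07991 — 2 statements merged into one kernel-verified Lean document; each statement's English description precedes it below -/
import Mathlib

section
/- Typing enforces refinement: let A→m1…mn:B1,…,Bn be a refinable action, and let Π be a set of participants and φ, Λ sets of labels such that (1) sbj(φ) = sbj(Λ) = Π, (2) sbj(φ ∩ L^!) = {A}, and (3) for every 1 ≤ h ≤ n there exists a participant C such that Λ̂(Bh) = {C Bh?mh}. Then for every ground g-choreography G, if Π ⊢ G : ⟨φ,Λ⟩ is derivable then G ref A→m1…mn:B1,…,Bn. -/
open scoped Classical

namespace Choreo

/-! ## Labels -/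

/-- Communication labels: output `A B!m` and input `A B?m`. -/
inductive Label (P M : Type) where
  | out : P → P → M → Label P M
  | inp : P → P → M → Label P M

variable {P M : Type}

/-- The subject of a label: the sender of an output, the receiver of an input. -/
def Label.sbj : Label P M → P
  | .out a _ _ => a
  | .inp _ b _ => b

/-- The set `L^!` of output labels (sender and receiver distinct). -/
def Lout : Set (Label P M) := {l | ∃ a b m, a ≠ b ∧ l = .out a b m}

/-- The set `L^?` of input labels (sender and receiver distinct). -/
def Lin : Set (Label P M) := {l | ∃ a b m, a ≠ b ∧ l = .inp a b m}

/-- `L̂(A)`: the labels in `L` whose subject is `A`. -/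
def hat (L : Set (Label P M)) (A : P) : Set (Label P M) := {l ∈ L | l.sbj = A}

/-- `sbj(L)`: the set of subjects of the labels in `L`. -/
def sbjSet (L : Set (Label P M)) : Set P := Label.sbj '' L

/-- `L − Π`: the labels in `L` whose subject is not in `Π`. -/
def lminus (L : Set (Label P M)) (Γ : Set P) : Set (Label P M) := {l ∈ L | l.sbj ∉ Γ}

/-! ## Labelled event structures (events drawn from ℕ) -/

/-- Data of a labelled (prime) event structure over events drawn from `ℕ`. -/
structure ES (P M : Type) where
  ev : Set ℕ
  le : ℕ → ℕ → Prop
  conf : ℕ → ℕ → Prop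
  lbl : ℕ → Label P M

namespace ES

variable (E : ES P M)

/-- Configurations: downward-closed conflict-free sets of events. -/
def Config (x : Set ℕ) : Prop :=
  x ⊆ E.ev ∧ (∀ e ∈ x, ∀ f ∈ E.ev, E.le f e → f ∈ x) ∧
    ∀ e ∈ x, ∀ f ∈ x, ¬ E.conf e f

/-- `MaxC E`: the ⊆-maximal configurations of `E`. -/
def MaxC : Set (Set ℕ) := {x | E.Config x ∧ ∀ y, E.Config y → x ⊆ y → y = x}

/-- Minimal events of `s ⊆ E.ev` with respect to `E.le`. -/
def minIn (s : Set ℕ) : Set ℕ := {e ∈ s | ∀ f ∈ s, E.le f e → f = e}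

/-- Maximal events of `s ⊆ E.ev` with respect to `E.le`. -/
def maxIn (s : Set ℕ) : Set ℕ := {e ∈ s | ∀ f ∈ s, E.le e f → f = e}

def minEv : Set ℕ := E.minIn E.ev
def maxEv : Set ℕ := E.maxIn E.ev

/-- Labels of the minimal events of `E`. -/
def minLbl : Set (Label P M) := E.lbl '' E.minEv

/-- Labels of the maximal events of `E`. -/
def maxLbl : Set (Label P M) := E.lbl '' E.maxEv

/-- All labels occurring in `E`. -/
def lblSet : Set (Label P M) := E.lbl '' E.ev

/-- The projection `E↾A`: the restriction of `E` to the events whose label has subject `A`. -/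
def proj (A : P) : ES P M where
  ev := {e ∈ E.ev | (E.lbl e).sbj = A}
  le u v := E.le u v ∧ (u ∈ E.ev ∧ (E.lbl u).sbj = A) ∧ (v ∈ E.ev ∧ (E.lbl v).sbj = A)
  conf u v := E.conf u v ∧ (u ∈ E.ev ∧ (E.lbl u).sbj = A) ∧ (v ∈ E.ev ∧ (E.lbl v).sbj = A)
  lbl := E.lbl

/-- The projection `x↾A` of a configuration (as a set of events of `E`). -/
def projC (x : Set ℕ) (A : P) : Set ℕ := {e ∈ x | (E.lbl e).sbj = A}

end ES

/-! ## Constructions on event structures -/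

/-- Tag for the events of a left component. -/
def tagL (e : ℕ) : ℕ := Nat.pair 0 e
/-- Tag for the events of a right component. -/
def tagR (e : ℕ) : ℕ := Nat.pair 1 e
/-- Tag for the events of the copy of the second component indexed by (the code of) a
maximal configuration of the first one. -/
def tagC (k e : ℕ) : ℕ := Nat.pair 1 (Nat.pair k e)

/-- A code (injective on finite sets) of sets of naturals. -/
noncomputable def encSet (x : Set ℕ) : ℕ :=
  if h : x.Finite then h.toFinset.sum (fun n => 2 ^ n) else 0

/-- The empty event structure `ε`. -/
noncomputable def esEmpty [Nonempty P] [Nonempty M] : ES P M where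
  ev := ∅
  le _ _ := False
  conf _ _ := False
  lbl _ := Label.out Classical.ofNonempty Classical.ofNonempty Classical.ofNonempty

/-- `⟦A→B:m⟧`: two ordered events labelled `A B!m < A B?m`. -/
def esAct (a b : P) (m : M) : ES P M where
  ev := {0, 1}
  le u v := (u = 0 ∧ v = 0) ∨ (u = 0 ∧ v = 1) ∨ (u = 1 ∧ v = 1)
  conf _ _ := False
  lbl e := if e = 0 then Label.out a b m else Label.inp a b m

/-- Tensor product `E1 ⊗ E2` (componentwise disjoint union). -/
def esTensor (E1 E2 : ES P M) : ES P M where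
  ev := (tagL '' E1.ev) ∪ (tagR '' E2.ev)
  le u v := (∃ e ∈ E1.ev, ∃ f ∈ E1.ev, E1.le e f ∧ u = tagL e ∧ v = tagL f) ∨
            (∃ e ∈ E2.ev, ∃ f ∈ E2.ev, E2.le e f ∧ u = tagR e ∧ v = tagR f)
  conf u v := (∃ e ∈ E1.ev, ∃ f ∈ E1.ev, E1.conf e f ∧ u = tagL e ∧ v = tagL f) ∨
              (∃ e ∈ E2.ev, ∃ f ∈ E2.ev, E2.conf e f ∧ u = tagR e ∧ v = tagR f)
  lbl u := if (Nat.unpair u).1 = 0 then E1.lbl (Nat.unpair u).2 else E2.lbl (Nat.unpair u).2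

/-- Sum `E1 + E2`: disjoint union with all cross pairs of events in conflict. -/
def esSum (E1 E2 : ES P M) : ES P M :=
  { esTensor E1 E2 with
    conf := fun u v => (esTensor E1 E2).conf u v ∨
      (∃ e ∈ E1.ev, ∃ f ∈ E2.ev, (u = tagL e ∧ v = tagR f) ∨ (u = tagR f ∧ v = tagL e)) }

/-- Sequential composition: appends to each maximal configuration `x` of `E1` a disjoint
copy of `E2`, ordering an event of `x` below an event of the copy whenever their labels
have the same subject. -/
noncomputable def esSeq (E1 E2 : ES P M) : ES P M where
  ev := (tagL '' E1.ev) ∪ {u | ∃ x ∈ E1.MaxC, ∃ e ∈ E2.ev, u = tagC (encSet x) e}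
  le u v :=
    (∃ e ∈ E1.ev, ∃ f ∈ E1.ev, E1.le e f ∧ u = tagL e ∧ v = tagL f) ∨
    (∃ x ∈ E1.MaxC, ∃ e ∈ E2.ev, ∃ f ∈ E2.ev, E2.le e f ∧
       u = tagC (encSet x) e ∧ v = tagC (encSet x) f) ∨
    (∃ x ∈ E1.MaxC, ∃ e ∈ x, ∃ f ∈ E2.ev, (E1.lbl e).sbj = (E2.lbl f).sbj ∧
       u = tagL e ∧ v = tagC (encSet x) f)
  conf u v :=
    (∃ e ∈ E1.ev, ∃ f ∈ E1.ev, E1.conf e f ∧ u = tagL e ∧ v = tagL f) ∨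
    (∃ x ∈ E1.MaxC, ∃ e ∈ E2.ev, ∃ f ∈ E2.ev, E2.conf e f ∧
       u = tagC (encSet x) e ∧ v = tagC (encSet x) f) ∨
    (∃ x ∈ E1.MaxC, ∃ x' ∈ E1.MaxC, x ≠ x' ∧ ∃ e ∈ E2.ev, ∃ f ∈ E2.ev,
       u = tagC (encSet x) e ∧ v = tagC (encSet x') f) ∨
    (∃ x ∈ E1.MaxC, ∃ e ∈ E1.ev, (∃ e' ∈ x, E1.conf e e') ∧ ∃ f ∈ E2.ev,
       ((u = tagL e ∧ v = tagC (encSet x) f) ∨ (u = tagC (encSet x) f ∧ v = tagL e)))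
  lbl u := if (Nat.unpair u).1 = 0 then E1.lbl (Nat.unpair u).2
           else E2.lbl (Nat.unpair (Nat.unpair u).2).2

/-! ## Well-branchedness -/

/-- Labels of the minimal events of the projection `E↾A`. -/
def minLblP (E : ES P M) (A : P) : Set (Label P M) := (E.proj A).minLbl

/-- `A` is active for the branches `E1`, `E2`. -/
def active (E1 E2 : ES P M) (A : P) : Prop :=
  minLblP E1 A ≠ ∅ ∧ minLblP E2 A ≠ ∅ ∧
  Disjoint (minLblP E1 A) (minLblP E2 A) ∧
  minLblP E1 A ∪ minLblP E2 A ⊆ Lout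

/-- `B` is passive for the branches `E1`, `E2`. -/
def passive (E1 E2 : ES P M) (B : P) : Prop :=
  Disjoint (minLblP E1 B) (minLblP E2 B) ∧
  minLblP E1 B ∪ minLblP E2 B ⊆ Lin ∧
  (minLblP E1 B = ∅ ↔ minLblP E2 B = ∅)

/-- Well-branchedness: a unique active participant, all other participants passive. -/
def wb (E1 E2 : ES P M) : Prop :=
  ∃ A, active E1 E2 A ∧ (∀ A', active E1 E2 A' → A' = A) ∧
    ∀ B, B ≠ A → passive E1 E2 B

/-! ## Ground g-choreographies and their semantics -/

/-- Ground g-choreographies: `G ::= 0 | A→B:m | G;G | G|G | G+G`. -/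
inductive GC (P M : Type) where
  | nil : GC P M
  | act : P → P → M → GC P M
  | seq : GC P M → GC P M → GC P M
  | par : GC P M → GC P M → GC P M
  | cho : GC P M → GC P M → GC P M

/-- `P(G)`: the participants occurring in `G`. -/
def parts : GC P M → Set P
  | .nil => ∅
  | .act a b _ => {a, b}
  | .seq g1 g2 => parts g1 ∪ parts g2
  | .par g1 g2 => parts g1 ∪ parts g2
  | .cho g1 g2 => parts g1 ∪ parts g2

/-- The semantics `⟦G⟧`: a labelled event structure, or `none` (i.e. `⊥`) when a side
condition fails (the grammar requires `A ≠ B` in interactions; parallel requires disjoint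
label sets; choice requires well-branchedness). -/
noncomputable def gsem [Nonempty P] [Nonempty M] : GC P M → Option (ES P M)
  | .nil => some esEmpty
  | .act a b m => if a = b then none else some (esAct a b m)
  | .seq g1 g2 =>
      match gsem g1, gsem g2 with
      | some E1, some E2 => some (esSeq E1 E2)
      | _, _ => none
  | .par g1 g2 =>
      match gsem g1, gsem g2 with
      | some E1, some E2 =>
          if Disjoint E1.lblSet E2.lblSet then some (esTensor E1 E2) else none
      | _, _ => none
  | .cho g1 g2 =>
      match gsem g1, gsem g2 with
      | some E1, some E2 => if wb E1 E2 then some (esSum E1 E2) else none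
      | _, _ => none

/-! ## The typing system -/

/-- Output uniform sets of labels. -/
def outUniform (U V : Set (Label P M)) : Prop := Disjoint U V ∧ U ∪ V ⊆ Lout

/-- Input uniform sets of labels. -/
def inUniform (U V : Set (Label P M)) : Prop := Disjoint U V ∧ U ∪ V ⊆ Lin

/-- The compatibility condition `compch(φ1,φ2,Π)` of rule t-ch. -/
def compch (φ1 φ2 : Set (Label P M)) (Γ : Set P) : Prop :=
  ∃ A ∈ Γ,
    (outUniform (hat φ1 A) (hat φ2 A) ∧ hat φ1 A ≠ ∅ ∧ hat φ2 A ≠ ∅) ∧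
    (∀ A' ∈ Γ, (outUniform (hat φ1 A') (hat φ2 A') ∧ hat φ1 A' ≠ ∅ ∧ hat φ2 A' ≠ ∅) →
        A' = A) ∧
    ∀ B ∈ Γ, B ≠ A →
      inUniform (hat φ1 B) (hat φ2 B) ∧ (hat φ1 B = ∅ ↔ hat φ2 B = ∅)

/-- The typing judgement `Π ⊢ G : ⟨φ,Λ⟩`. -/
inductive Typing : Set P → GC P M → Set (Label P M) → Set (Label P M) → Prop where
  | temp : Typing ∅ GC.nil ∅ ∅
  | tint {a b : P} {m : M} (hab : a ≠ b) :
      Typing {a, b} (GC.act a b m)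
        {Label.out a b m, Label.inp a b m} {Label.out a b m, Label.inp a b m}
  | tseq {Γ1 Γ2 : Set P} {g1 g2 : GC P M} {φ1 φ2 Λ1 Λ2 : Set (Label P M)} :
      Typing Γ1 g1 φ1 Λ1 → Typing Γ2 g2 φ2 Λ2 →
      Typing (Γ1 ∪ Γ2) (GC.seq g1 g2) (φ1 ∪ lminus φ2 Γ1) (Λ2 ∪ lminus Λ1 Γ2)
  | tpar {Γ1 Γ2 : Set P} {g1 g2 : GC P M} {φ1 φ2 Λ1 Λ2 : Set (Label P M)} :
      Typing Γ1 g1 φ1 Λ1 → Typing Γ2 g2 φ2 Λ2 → Γ1 ∩ Γ2 = ∅ →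
      Typing (Γ1 ∪ Γ2) (GC.par g1 g2) (φ1 ∪ φ2) (Λ1 ∪ Λ2)
  | tch {Γ : Set P} {g1 g2 : GC P M} {φ1 φ2 Λ1 Λ2 : Set (Label P M)} :
      Typing Γ g1 φ1 Λ1 → Typing Γ g2 φ2 Λ2 → compch φ1 φ2 Γ →
      Typing Γ (GC.cho g1 g2) (φ1 ∪ φ2) (Λ1 ∪ Λ2)


/-! ## One-hole contexts and their typing (hole axiom `Γh ⊢ [·] : ⟨φh,Λh⟩`) -/

/-- g-choreography contexts with a single hole. -/
inductive Ctx (P M : Type) where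
  | hole : Ctx P M
  | seqL : Ctx P M → GC P M → Ctx P M
  | seqR : GC P M → Ctx P M → Ctx P M
  | parL : Ctx P M → GC P M → Ctx P M
  | parR : GC P M → Ctx P M → Ctx P M
  | choL : Ctx P M → GC P M → Ctx P M
  | choR : GC P M → Ctx P M → Ctx P M

/-- `C.fill g = C[g]`, the replacement of the hole of `C` by `g`. -/
def Ctx.fill : Ctx P M → GC P M → GC P M
  | .hole, g => g
  | .seqL c g2, g => GC.seq (c.fill g) g2
  | .seqR g1 c, g => GC.seq g1 (c.fill g)
  | .parL c g2, g => GC.par (c.fill g) g2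
  | .parR g1 c, g => GC.par g1 (c.fill g)
  | .choL c g2, g => GC.cho (c.fill g) g2
  | .choR g1 c, g => GC.cho g1 (c.fill g)

/-- Typing of one-hole contexts in the type system extended with the axiom
`Γh ⊢ [·] : ⟨φh,Λh⟩` for the hole. -/
inductive CTyping (Γh : Set P) (φh Λh : Set (Label P M)) :
    Set P → Ctx P M → Set (Label P M) → Set (Label P M) → Prop where
  | hole : CTyping Γh φh Λh Γh Ctx.hole φh Λh
  | seqL {Γ1 Γ2 : Set P} {c : Ctx P M} {g : GC P M} {φ1 φ2 Λ1 Λ2 : Set (Label P M)} :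
      CTyping Γh φh Λh Γ1 c φ1 Λ1 → Typing Γ2 g φ2 Λ2 →
      CTyping Γh φh Λh (Γ1 ∪ Γ2) (Ctx.seqL c g) (φ1 ∪ lminus φ2 Γ1) (Λ2 ∪ lminus Λ1 Γ2)
  | seqR {Γ1 Γ2 : Set P} {g : GC P M} {c : Ctx P M} {φ1 φ2 Λ1 Λ2 : Set (Label P M)} :
      Typing Γ1 g φ1 Λ1 → CTyping Γh φh Λh Γ2 c φ2 Λ2 →
      CTyping Γh φh Λh (Γ1 ∪ Γ2) (Ctx.seqR g c) (φ1 ∪ lminus φ2 Γ1) (Λ2 ∪ lminus Λ1 Γ2)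
  | parL {Γ1 Γ2 : Set P} {c : Ctx P M} {g : GC P M} {φ1 φ2 Λ1 Λ2 : Set (Label P M)} :
      CTyping Γh φh Λh Γ1 c φ1 Λ1 → Typing Γ2 g φ2 Λ2 → Γ1 ∩ Γ2 = ∅ →
      CTyping Γh φh Λh (Γ1 ∪ Γ2) (Ctx.parL c g) (φ1 ∪ φ2) (Λ1 ∪ Λ2)
  | parR {Γ1 Γ2 : Set P} {g : GC P M} {c : Ctx P M} {φ1 φ2 Λ1 Λ2 : Set (Label P M)} :
      Typing Γ1 g φ1 Λ1 → CTyping Γh φh Λh Γ2 c φ2 Λ2 → Γ1 ∩ Γ2 = ∅ →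
      CTyping Γh φh Λh (Γ1 ∪ Γ2) (Ctx.parR g c) (φ1 ∪ φ2) (Λ1 ∪ Λ2)
  | choL {Γ : Set P} {c : Ctx P M} {g : GC P M} {φ1 φ2 Λ1 Λ2 : Set (Label P M)} :
      CTyping Γh φh Λh Γ c φ1 Λ1 → Typing Γ g φ2 Λ2 → compch φ1 φ2 Γ →
      CTyping Γh φh Λh Γ (Ctx.choL c g) (φ1 ∪ φ2) (Λ1 ∪ Λ2)
  | choR {Γ : Set P} {g : GC P M} {c : Ctx P M} {φ1 φ2 Λ1 Λ2 : Set (Label P M)} :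
      Typing Γ g φ1 Λ1 → CTyping Γh φh Λh Γ c φ2 Λ2 → compch φ1 φ2 Γ →
      CTyping Γh φh Λh Γ (Ctx.choR g c) (φ1 ∪ φ2) (Λ1 ∪ Λ2)

/-! ## Refinable actions, t-ref, and refinement -/

/-- The three side conditions of the axiom schema t-ref for the refinable action
`A → m1…mn : B1,…,Bn`, represented by the initiator `A` and the nonempty list
`l = [(m1,B1),…,(mn,Bn)]` with pairwise distinct `Bi`. -/
def trefCond (Γ : Set P) (φ Λ : Set (Label P M)) (A : P) (l : List (M × P)) : Prop :=
  l ≠ [] ∧ (l.map Prod.snd).Nodup ∧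
  sbjSet φ = Γ ∧ sbjSet Λ = Γ ∧ sbjSet (φ ∩ Lout) = {A} ∧
  ∀ p ∈ l, ∃ C ∈ Γ, hat Λ p.2 = {Label.inp C p.2 p.1}

/-- `G ref A→m1…mn:B1,…,Bn`: the ground g-choreography `G` refines the refinable action
given by initiator `A` and list `l = [(m1,B1),…,(mn,Bn)]`. -/
def Refines [Nonempty P] [Nonempty M] (G : GC P M) (A : P) (l : List (M × P)) : Prop :=
  ∃ E : ES P M, gsem G = some E ∧
    sbjSet E.minLbl = {A} ∧
    ∀ x ∈ E.MaxC, ∀ p ∈ l, ∃ C ∈ parts G,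
      Label.inp C p.2 p.1 ∈ E.lbl '' (E.maxIn (E.projC x p.2))

/-! ## Multi-hole contexts -/

/-- g-choreography contexts with (numbered) holes. -/
inductive MCtx (P M : Type) where
  | hole : ℕ → MCtx P M
  | nil : MCtx P M
  | act : P → P → M → MCtx P M
  | seq : MCtx P M → MCtx P M → MCtx P M
  | par : MCtx P M → MCtx P M → MCtx P M
  | cho : MCtx P M → MCtx P M → MCtx P M

/-- The (indices of the) holes occurring in a multi-hole context. -/
def MCtx.holes : MCtx P M → List ℕ
  | .hole i => [i]
  | .nil => []
  | .act _ _ _ => []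
  | .seq c1 c2 => c1.holes ++ c2.holes
  | .par c1 c2 => c1.holes ++ c2.holes
  | .cho c1 c2 => c1.holes ++ c2.holes

/-- `C.fill g`: replace each hole `[·]i` by `g i`. -/
def MCtx.fill : MCtx P M → (ℕ → GC P M) → GC P M
  | .hole i, g => g i
  | .nil, _ => GC.nil
  | .act a b m, _ => GC.act a b m
  | .seq c1 c2, g => GC.seq (c1.fill g) (c2.fill g)
  | .par c1 c2, g => GC.par (c1.fill g) (c2.fill g)
  | .cho c1 c2, g => GC.cho (c1.fill g) (c2.fill g)

/-- Typing of multi-hole contexts in the extended type system, where hole `i` is typed by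
the axiom `(σ i).1 ⊢ [·]i : ⟨(σ i).2.1, (σ i).2.2⟩`. -/
inductive MTyping (σ : ℕ → Set P × Set (Label P M) × Set (Label P M)) :
    Set P → MCtx P M → Set (Label P M) → Set (Label P M) → Prop where
  | hole (i : ℕ) : MTyping σ (σ i).1 (MCtx.hole i) (σ i).2.1 (σ i).2.2
  | temp : MTyping σ ∅ MCtx.nil ∅ ∅
  | tint {a b : P} {m : M} (hab : a ≠ b) :
      MTyping σ {a, b} (MCtx.act a b m)
        {Label.out a b m, Label.inp a b m} {Label.out a b m, Label.inp a b m}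
  | tseq {Γ1 Γ2 : Set P} {c1 c2 : MCtx P M} {φ1 φ2 Λ1 Λ2 : Set (Label P M)} :
      MTyping σ Γ1 c1 φ1 Λ1 → MTyping σ Γ2 c2 φ2 Λ2 →
      MTyping σ (Γ1 ∪ Γ2) (MCtx.seq c1 c2) (φ1 ∪ lminus φ2 Γ1) (Λ2 ∪ lminus Λ1 Γ2)
  | tpar {Γ1 Γ2 : Set P} {c1 c2 : MCtx P M} {φ1 φ2 Λ1 Λ2 : Set (Label P M)} :
      MTyping σ Γ1 c1 φ1 Λ1 → MTyping σ Γ2 c2 φ2 Λ2 → Γ1 ∩ Γ2 = ∅ →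
      MTyping σ (Γ1 ∪ Γ2) (MCtx.par c1 c2) (φ1 ∪ φ2) (Λ1 ∪ Λ2)
  | tch {Γ : Set P} {c1 c2 : MCtx P M} {φ1 φ2 Λ1 Λ2 : Set (Label P M)} :
      MTyping σ Γ c1 φ1 Λ1 → MTyping σ Γ c2 φ2 Λ2 → compch φ1 φ2 Γ →
      MTyping σ Γ (MCtx.cho c1 c2) (φ1 ∪ φ2) (Λ1 ∪ Λ2)

/-!
By induction on the typing derivation, `⟦G⟧` is defined and satisfies `Realizes Γ φ Λ`: the
labels of the minimal events of each projection `⟦G⟧↾B` are exactly `φ̂(B)`, every maximal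
configuration `x` has, for each `B ∈ Γ`, a maximal event of `x↾B` labelled in `Λ`, and minimal
events are outputs. The first clause turns `compch` into well-branchedness, so choices are
defined. The tags embed the components into `⊗`, `+` and `;` and transport minimal and maximal
events and configurations; for `;` the point is that a configuration meets at most one copy of
the second component, the one indexed by a maximal configuration containing its first part.

Refinement follows: a minimal event of `⟦G⟧` is minimal in the projection on its subject, so
its label is an output in `φ`, whose subject can only be `A`; and a maximal event of `x↾Bₕ`
labelled in `Λ` has its label in `Λ̂(Bₕ) = {C Bₕ?mₕ}`, where `C` occurs in `G` because typing only
puts in `Λ` inputs sent by participants of `G`.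
-/

@[simp] lemma tagL_inj {e f : ℕ} : tagL e = tagL f ↔ e = f := by simp [tagL]

@[simp] lemma tagR_inj {e f : ℕ} : tagR e = tagR f ↔ e = f := by simp [tagR]

@[simp] lemma tagC_inj {k e k' e' : ℕ} : tagC k e = tagC k' e' ↔ k = k' ∧ e = e' := by
  simp [tagC]

@[simp] lemma tagL_ne_tagR {e f : ℕ} : tagL e ≠ tagR f := by simp [tagL, tagR]

@[simp] lemma tagR_ne_tagL {e f : ℕ} : tagR e ≠ tagL f := by simp [tagL, tagR]

@[simp] lemma tagL_ne_tagC {e k f : ℕ} : tagL e ≠ tagC k f := by simp [tagL, tagC]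

@[simp] lemma tagC_ne_tagL {e k f : ℕ} : tagC k f ≠ tagL e := by simp [tagL, tagC]

lemma tagL_injective : Function.Injective tagL := fun _ _ => tagL_inj.1

lemma tagR_injective : Function.Injective tagR := fun _ _ => tagR_inj.1

lemma tagC_injective (k : ℕ) : Function.Injective (tagC k) := fun _ _ h => (tagC_inj.1 h).2

@[simp] lemma preimage_tagL_image_tagR (s : Set ℕ) : tagL ⁻¹' (tagR '' s) = ∅ := by
  ext; simp

@[simp] lemma preimage_tagR_image_tagL (s : Set ℕ) : tagR ⁻¹' (tagL '' s) = ∅ := by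
  ext; simp

@[simp] lemma preimage_tagL_image_tagC (k : ℕ) (s : Set ℕ) : tagL ⁻¹' (tagC k '' s) = ∅ := by
  ext; simp

lemma encSet_injOn : Set.InjOn encSet {x : Set ℕ | x.Finite} := by
  intro x (hx : x.Finite) y (hy : y.Finite) h
  rw [encSet, dif_pos hx, encSet, dif_pos hy] at h
  rw [← hx.coe_toFinset, ← hy.coe_toFinset, Finset.geomSum_injective le_rfl h]

namespace ES

section

variable {E : ES P M} {s t x y : Set ℕ}

lemma config_empty (E : ES P M) : E.Config ∅ := ⟨by simp, by simp, by simp⟩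

lemma Config.union (hx : E.Config x) (hy : E.Config y)
    (hxy : ∀ a ∈ x, ∀ b ∈ y, ¬ E.conf a b ∧ ¬ E.conf b a) : E.Config (x ∪ y) := by
  refine ⟨Set.union_subset hx.1 hy.1, ?_, ?_⟩
  · rintro e (he | he) f hf hfe
    exacts [Or.inl (hx.2.1 e he f hf hfe), Or.inr (hy.2.1 e he f hf hfe)]
  · rintro e (he | he) f (hf | hf)
    exacts [hx.2.2 e he f hf, (hxy e he f hf).1, (hxy f hf e he).2, hy.2.2 e he f hf]

lemma exists_maxC (hfin : E.ev.Finite) (hx : E.Config x) : ∃ y ∈ E.MaxC, x ⊆ y := by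
  let S : Set (Set ℕ) := {y | E.Config y ∧ x ⊆ y}
  have hS : S.Finite := hfin.finite_subsets.subset fun y hy => hy.1.1
  obtain ⟨y, ⟨hy, hxy⟩, hmax⟩ := hS.exists_maximalFor Set.ncard S ⟨x, hx, subset_rfl⟩
  refine ⟨y, ⟨hy, fun z hz hyz => ?_⟩, hxy⟩
  have hzfin : z.Finite := hfin.subset hz.1
  exact (Set.eq_of_subset_of_ncard_le hyz
    (hmax ⟨hz, hxy.trans hyz⟩ (Set.ncard_le_ncard hyz hzfin)) hzfin).symm

lemma maxC_nonempty (hfin : E.ev.Finite) : E.MaxC.Nonempty :=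
  let ⟨y, hy, _⟩ := exists_maxC hfin E.config_empty; ⟨y, hy⟩

lemma maxC_finite (hfin : E.ev.Finite) : E.MaxC.Finite :=
  hfin.finite_subsets.subset fun _ hx => hx.1.1

lemma encSet_injOn_maxC (hfin : E.ev.Finite) : Set.InjOn encSet E.MaxC :=
  encSet_injOn.mono fun _ hx => hfin.subset hx.1.1

/-- Acyclicity of `E.le` (the structure `ES` carries no order axioms), witnessed by a rank
strictly increasing along it. -/
def HasRank (E : ES P M) : Prop :=
  ∃ r : ℕ → ℕ, ∀ e ∈ E.ev, ∀ f ∈ E.ev, E.le e f → e ≠ f → r e < r f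

lemma minIn_nonempty (hfin : E.ev.Finite) (hrk : E.HasRank) (hs : s ⊆ E.ev)
    (hne : s.Nonempty) : (E.minIn s).Nonempty := by
  obtain ⟨r, hr⟩ := hrk
  obtain ⟨e, he, hmin⟩ := (hfin.subset hs).exists_minimalFor r s hne
  refine ⟨e, he, fun f hf hfe => by_contra fun hne => ?_⟩
  have := hr f (hs hf) e (hs he) hfe hne
  exact absurd (hmin hf this.le) (by omega)

lemma minIn_eq_self (hs : s.Subsingleton) : E.minIn s = s :=
  Set.sep_eq_self_iff_mem_true.2 fun _ he _ hf _ => hs hf he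

lemma maxIn_eq_self (hs : s.Subsingleton) : E.maxIn s = s :=
  Set.sep_eq_self_iff_mem_true.2 fun _ he _ hf _ => hs hf he

lemma mem_minIn_of_subset (hst : s ⊆ t) {e : ℕ} (he : e ∈ s) (hmin : e ∈ E.minIn t) :
    e ∈ E.minIn s :=
  ⟨he, fun f hf => hmin.2 f (hst hf)⟩

end

structure IsEmbedding (f : ℕ → ℕ) (E' E : ES P M) : Prop where
  injective : Function.Injective f
  mem_iff : ∀ a, f a ∈ E.ev ↔ a ∈ E'.ev
  le_iff : ∀ a ∈ E'.ev, ∀ b ∈ E'.ev, E.le (f a) (f b) ↔ E'.le a b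
  conf : ∀ a ∈ E'.ev, ∀ b ∈ E'.ev, E'.conf a b → E.conf (f a) (f b)
  lbl_eq : ∀ a, E.lbl (f a) = E'.lbl a

namespace IsEmbedding

variable {f : ℕ → ℕ} {E' E : ES P M} {t x : Set ℕ} {a : ℕ}

lemma preimage_ev (hf : IsEmbedding f E' E) : f ⁻¹' E.ev = E'.ev :=
  Set.ext hf.mem_iff

lemma preimage_projC (hf : IsEmbedding f E' E) (B : P) :
    f ⁻¹' E.projC x B = E'.projC (f ⁻¹' x) B := by
  ext a
  simp only [ES.projC, Set.mem_preimage, Set.mem_ofPred_eq, hf.lbl_eq]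

lemma preimage_projC_ev (hf : IsEmbedding f E' E) (B : P) :
    f ⁻¹' E.projC E.ev B = E'.projC E'.ev B := by
  rw [hf.preimage_projC, hf.preimage_ev]

lemma mem_of_mem_preimage (hf : IsEmbedding f E' E) (ht : t ⊆ E.ev) (ha : a ∈ f ⁻¹' t) :
    a ∈ E'.ev :=
  (hf.mem_iff a).1 (ht ha)

lemma image_subset_ev (hf : IsEmbedding f E' E) {y : Set ℕ} (hy : y ⊆ E'.ev) :
    f '' y ⊆ E.ev :=
  Set.image_subset_iff.2 fun a ha => (hf.mem_iff a).2 (hy ha)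

lemma config_preimage (hf : IsEmbedding f E' E) (hx : E.Config x) : E'.Config (f ⁻¹' x) := by
  have hsub : f ⁻¹' x ⊆ E'.ev := fun _ => hf.mem_of_mem_preimage hx.1
  refine ⟨hsub, fun a ha b hb hba => ?_, fun a ha b hb hab => ?_⟩
  · exact hx.2.1 _ ha _ ((hf.mem_iff b).2 hb) ((hf.le_iff b hb a (hsub ha)).2 hba)
  · exact hx.2.2 _ ha _ hb (hf.conf a (hsub ha) b (hsub hb) hab)

lemma mem_minIn_preimage (hf : IsEmbedding f E' E) (ht : t ⊆ E.ev) (ha : f a ∈ E.minIn t) :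
    a ∈ E'.minIn (f ⁻¹' t) := by
  have hev := fun {b} => hf.mem_of_mem_preimage (a := b) ht
  refine ⟨ha.1, fun b hb hba => hf.injective ?_⟩
  exact ha.2 _ hb ((hf.le_iff b (hev hb) a (hev ha.1)).2 hba)

lemma mem_minIn_iff (hf : IsEmbedding f E' E) (ht : t ⊆ E.ev)
    (hdown : ∀ u ∈ t, E.le u (f a) → u ∈ Set.range f) :
    f a ∈ E.minIn t ↔ a ∈ E'.minIn (f ⁻¹' t) := by
  refine ⟨hf.mem_minIn_preimage ht, fun ha => ⟨ha.1, fun u hu hua => ?_⟩⟩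
  obtain ⟨b, rfl⟩ := hdown u hu hua
  have hev := fun {c} => hf.mem_of_mem_preimage (a := c) ht
  rw [ha.2 b hu ((hf.le_iff b (hev hu) a (hev ha.1)).1 hua)]

lemma mem_maxIn (hf : IsEmbedding f E' E) (ht : t ⊆ E.ev)
    (hup : ∀ u ∈ t, E.le (f a) u → u ∈ Set.range f) (ha : a ∈ E'.maxIn (f ⁻¹' t)) :
    f a ∈ E.maxIn t := by
  refine ⟨ha.1, fun u hu hau => ?_⟩
  obtain ⟨b, rfl⟩ := hup u hu hau
  have hev := fun {c} => hf.mem_of_mem_preimage (a := c) ht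
  rw [ha.2 b hu ((hf.le_iff a (hev ha.1) b (hev hu)).1 hau)]

lemma image_minIn_inter_range (hf : IsEmbedding f E' E) (ht : t ⊆ E.ev)
    (hdown : ∀ a, ∀ u ∈ t, E.le u (f a) → u ∈ Set.range f) :
    E.lbl '' (E.minIn t ∩ Set.range f) = E'.lbl '' E'.minIn (f ⁻¹' t) := by
  ext l
  constructor
  · rintro ⟨_, ⟨hu, a, rfl⟩, rfl⟩
    exact ⟨a, (hf.mem_minIn_iff ht (hdown a)).1 hu, (hf.lbl_eq a).symm⟩
  · rintro ⟨a, ha, rfl⟩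
    exact ⟨f a, ⟨(hf.mem_minIn_iff ht (hdown a)).2 ha, a, rfl⟩, hf.lbl_eq a⟩

lemma lbl_mem_minLbl (hf : IsEmbedding f E' E) (ha : f a ∈ E.minEv) :
    E.lbl (f a) ∈ E'.minLbl := by
  rw [hf.lbl_eq]
  have := hf.mem_minIn_preimage subset_rfl ha
  rw [hf.preimage_ev] at this
  exact ⟨a, this, rfl⟩

lemma exists_lbl_mem_maxIn_projC (hf : IsEmbedding f E' E) (hx : x ⊆ E.ev) {B : P}
    {Λ : Set (Label P M)} (hup : ∀ a, ∀ u ∈ E.projC x B, E.le (f a) u → u ∈ Set.range f)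
    (h : ∃ a ∈ E'.maxIn (E'.projC (f ⁻¹' x) B), E'.lbl a ∈ Λ) :
    ∃ e ∈ E.maxIn (E.projC x B), E.lbl e ∈ Λ := by
  obtain ⟨a, ha, hl⟩ := h
  rw [← hf.preimage_projC] at ha
  exact ⟨f a, hf.mem_maxIn ((Set.sep_subset _ _).trans hx) (hup a) ha, hf.lbl_eq a ▸ hl⟩

lemma maxC_preimage (hf : IsEmbedding f E' E) (hx : x ∈ E.MaxC)
    (hext : ∀ y, E'.Config y → f ⁻¹' x ⊆ y → E.Config (x ∪ f '' y)) : f ⁻¹' x ∈ E'.MaxC := by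
  refine ⟨hf.config_preimage hx.1, fun y hy hxy => ?_⟩
  have hX := hx.2 _ (hext y hy hxy) Set.subset_union_left
  refine hxy.antisymm' fun a ha => ?_
  rw [Set.mem_preimage, ← hX]
  exact Or.inr ⟨a, ha, rfl⟩

end IsEmbedding

end ES

lemma hat_union (U V : Set (Label P M)) (A : P) : hat (U ∪ V) A = hat U A ∪ hat V A :=
  Set.sep_union

lemma hat_lminus_of_mem {Γ : Set P} {B : P} (hB : B ∈ Γ) (φ : Set (Label P M)) :
    hat (lminus φ Γ) B = ∅ :=
  Set.eq_empty_of_forall_notMem fun _ ⟨⟨_, h⟩, hl⟩ => h (hl ▸ hB)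

lemma hat_lminus_of_notMem {Γ : Set P} {B : P} (hB : B ∉ Γ) (φ : Set (Label P M)) :
    hat (lminus φ Γ) B = hat φ B :=
  Set.ext fun _ => ⟨fun ⟨⟨h, _⟩, hl⟩ => ⟨h, hl⟩, fun ⟨h, hl⟩ => ⟨⟨h, hl ▸ hB⟩, hl⟩⟩

lemma lbl_image_projC (E : ES P M) (x : Set ℕ) (B : P) :
    E.lbl '' E.projC x B = hat (E.lbl '' x) B :=
  Set.image_inter_preimage E.lbl x {l | l.sbj = B}

lemma minLblP_eq (E : ES P M) (B : P) :
    minLblP E B = E.lbl '' E.minIn (E.projC E.ev B) := by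
  unfold minLblP ES.minLbl
  congr 1
  ext e
  unfold ES.minEv ES.minIn ES.projC ES.proj
  simp only
  constructor
  · rintro ⟨he, h⟩
    exact ⟨he, fun f hf hfe => h f hf ⟨hfe, hf, he⟩⟩
  · rintro ⟨he, h⟩
    exact ⟨he, fun f hf hfe => h f hf hfe.1⟩

section TensorSum

variable {E1 E2 : ES P M} {x : Set ℕ}

lemma isEmbedding_tensor_inl : ES.IsEmbedding tagL E1 (esTensor E1 E2) where
  injective := tagL_injective
  mem_iff a := by simp [esTensor]
  le_iff a ha b hb := by simp [esTensor, ha, hb]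
  conf a ha b hb h := Or.inl ⟨a, ha, b, hb, h, rfl, rfl⟩
  lbl_eq a := by simp [esTensor, tagL]

lemma isEmbedding_tensor_inr : ES.IsEmbedding tagR E2 (esTensor E1 E2) where
  injective := tagR_injective
  mem_iff a := by simp [esTensor]
  le_iff a ha b hb := by simp [esTensor, ha, hb]
  conf a ha b hb h := Or.inr ⟨a, ha, b, hb, h, rfl, rfl⟩
  lbl_eq a := by simp [esTensor, tagR]

lemma isEmbedding_sum_inl : ES.IsEmbedding tagL E1 (esSum E1 E2) :=
  { isEmbedding_tensor_inl with
    conf := fun a ha b hb h => Or.inl (Or.inl ⟨a, ha, b, hb, h, rfl, rfl⟩) }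

lemma isEmbedding_sum_inr : ES.IsEmbedding tagR E2 (esSum E1 E2) :=
  { isEmbedding_tensor_inr with
    conf := fun a ha b hb h => Or.inl (Or.inr ⟨a, ha, b, hb, h, rfl, rfl⟩) }

lemma tensor_le_tagL {u a : ℕ} (h : (esTensor E1 E2).le u (tagL a)) : u ∈ Set.range tagL := by
  rcases h with ⟨c, -, -, -, -, rfl, -⟩ | ⟨_, _, _, _, _, _, h'⟩
  · exact ⟨c, rfl⟩
  · simp at h'

lemma tensor_le_tagR {u a : ℕ} (h : (esTensor E1 E2).le u (tagR a)) : u ∈ Set.range tagR := by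
  rcases h with ⟨_, _, _, _, _, _, h'⟩ | ⟨c, -, -, -, -, rfl, -⟩
  · simp at h'
  · exact ⟨c, rfl⟩

lemma tensor_tagL_le {u a : ℕ} (h : (esTensor E1 E2).le (tagL a) u) : u ∈ Set.range tagL := by
  rcases h with ⟨-, -, c, -, -, -, rfl⟩ | ⟨_, _, _, _, _, h', _⟩
  · exact ⟨c, rfl⟩
  · simp at h'

lemma tensor_tagR_le {u a : ℕ} (h : (esTensor E1 E2).le (tagR a) u) : u ∈ Set.range tagR := by
  rcases h with ⟨_, _, _, _, _, h', _⟩ | ⟨-, -, c, -, -, -, rfl⟩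
  · simp at h'
  · exact ⟨c, rfl⟩

lemma finite_tensor (h1 : E1.ev.Finite) (h2 : E2.ev.Finite) : (esTensor E1 E2).ev.Finite :=
  (h1.image tagL).union (h2.image tagR)

lemma hasRank_tensor (h1 : E1.HasRank) (h2 : E2.HasRank) : (esTensor E1 E2).HasRank := by
  obtain ⟨r1, hr1⟩ := h1
  obtain ⟨r2, hr2⟩ := h2
  refine ⟨fun u => if (Nat.unpair u).1 = 0 then r1 (Nat.unpair u).2 else r2 (Nat.unpair u).2,
    ?_⟩
  rintro _ _ _ _ (⟨a, ha, b, hb, hab, rfl, rfl⟩ | ⟨a, ha, b, hb, hab, rfl, rfl⟩) hne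
  · simpa [tagL] using hr1 a ha b hb hab (by rintro rfl; exact hne rfl)
  · simpa [tagR] using hr2 a ha b hb hab (by rintro rfl; exact hne rfl)

lemma tensor_config_of_preimage (hx : x ⊆ (esTensor E1 E2).ev)
    (h1 : E1.Config (tagL ⁻¹' x)) (h2 : E2.Config (tagR ⁻¹' x)) :
    (esTensor E1 E2).Config x := by
  refine ⟨hx, ?_, ?_⟩
  · rintro _ hu _ - (⟨a, ha, b, -, hab, rfl, rfl⟩ | ⟨a, ha, b, -, hab, rfl, rfl⟩)
    exacts [h1.2.1 b hu a ha hab, h2.2.1 b hu a ha hab]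
  · rintro _ hu _ hv (⟨a, -, b, -, hab, rfl, rfl⟩ | ⟨a, -, b, -, hab, rfl, rfl⟩)
    exacts [h1.2.2 a hu b hv hab, h2.2.2 a hu b hv hab]

lemma maxC_tensor (hx : x ∈ (esTensor E1 E2).MaxC) :
    tagL ⁻¹' x ∈ E1.MaxC ∧ tagR ⁻¹' x ∈ E2.MaxC := by
  have hL := isEmbedding_tensor_inl (E1 := E1) (E2 := E2)
  have hR := isEmbedding_tensor_inr (E1 := E1) (E2 := E2)
  constructor
  · refine hL.maxC_preimage hx fun y hy hxy => tensor_config_of_preimage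
      (Set.union_subset hx.1.1 (hL.image_subset_ev hy.1)) ?_ ?_
    · simpa [tagL_injective.preimage_image, Set.union_eq_right.2 hxy] using hy
    · simpa using hR.config_preimage hx.1
  · refine hR.maxC_preimage hx fun z hz hxz => tensor_config_of_preimage
      (Set.union_subset hx.1.1 (hR.image_subset_ev hz.1)) ?_ ?_
    · simpa using hL.config_preimage hx.1
    · simpa [tagR_injective.preimage_image, Set.union_eq_right.2 hxz] using hz

lemma sum_config_of_preimage (hx : x ⊆ (esSum E1 E2).ev)
    (h1 : E1.Config (tagL ⁻¹' x)) (h2 : E2.Config (tagR ⁻¹' x))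
    (h12 : tagL ⁻¹' x = ∅ ∨ tagR ⁻¹' x = ∅) : (esSum E1 E2).Config x := by
  have hT := tensor_config_of_preimage hx h1 h2
  refine ⟨hx, hT.2.1, fun u hu v hv => ?_⟩
  rintro (h | ⟨a, -, b, -, ⟨rfl, rfl⟩ | ⟨rfl, rfl⟩⟩)
  · exact hT.2.2 u hu v hv h
  · exact h12.elim (fun h => h.subset hu) (fun h => h.subset hv)
  · exact h12.elim (fun h => h.subset hv) (fun h => h.subset hu)

lemma maxC_sum (hx : x ∈ (esSum E1 E2).MaxC) :
    tagL ⁻¹' x ∈ E1.MaxC ∨ tagR ⁻¹' x ∈ E2.MaxC := by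
  have hL := isEmbedding_sum_inl (E1 := E1) (E2 := E2)
  have hR := isEmbedding_sum_inr (E1 := E1) (E2 := E2)
  have hcross : tagL ⁻¹' x = ∅ ∨ tagR ⁻¹' x = ∅ := by
    by_contra! ⟨⟨a, ha⟩, ⟨b, hb⟩⟩
    exact hx.1.2.2 _ ha _ hb (Or.inr ⟨a, hL.mem_of_mem_preimage hx.1.1 ha,
      b, hR.mem_of_mem_preimage hx.1.1 hb, Or.inl ⟨rfl, rfl⟩⟩)
  rcases hcross with h | h
  · refine Or.inr (hR.maxC_preimage hx fun z hz hxz => sum_config_of_preimage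
      (Set.union_subset hx.1.1 (hR.image_subset_ev hz.1)) (by simpa [h] using E1.config_empty)
      ?_ (by simp [h]))
    simpa [tagR_injective.preimage_image, Set.union_eq_right.2 hxz] using hz
  · refine Or.inl (hL.maxC_preimage hx fun y hy hxy => sum_config_of_preimage
      (Set.union_subset hx.1.1 (hL.image_subset_ev hy.1)) ?_
      (by simpa [h] using E2.config_empty) (by simp [h]))
    simpa [tagL_injective.preimage_image, Set.union_eq_right.2 hxy] using hy

lemma minLblP_tensor (B : P) :
    minLblP (esTensor E1 E2) B = minLblP E1 B ∪ minLblP E2 B := by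
  let E := esTensor E1 E2
  have ht : E.projC E.ev B ⊆ E.ev := Set.sep_subset _ _
  have hcover : E.minIn (E.projC E.ev B) ⊆ Set.range tagL ∪ Set.range tagR := by
    rintro _ ⟨⟨⟨a, -, rfl⟩ | ⟨a, -, rfl⟩, -⟩, -⟩
    exacts [Or.inl ⟨a, rfl⟩, Or.inr ⟨a, rfl⟩]
  rw [minLblP_eq, minLblP_eq, minLblP_eq, ← Set.inter_eq_left.2 hcover,
    Set.inter_union_distrib_left, Set.image_union,
    isEmbedding_tensor_inl.image_minIn_inter_range ht fun _ _ _ => tensor_le_tagL,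
    isEmbedding_tensor_inr.image_minIn_inter_range ht fun _ _ _ => tensor_le_tagR,
    isEmbedding_tensor_inl.preimage_projC_ev, isEmbedding_tensor_inr.preimage_projC_ev]

end TensorSum

section Seq

variable {E1 E2 : ES P M} {x y z : Set ℕ}

lemma isEmbedding_seq_inl : ES.IsEmbedding tagL E1 (esSeq E1 E2) where
  injective := tagL_injective
  mem_iff a := by simp [esSeq]
  le_iff a ha b hb := by simp [esSeq, ha, hb]
  conf a ha b hb h := Or.inl ⟨a, ha, b, hb, h, rfl, rfl⟩
  lbl_eq a := by simp [esSeq, tagL]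

lemma isEmbedding_seq_copy (hx : x ∈ E1.MaxC) :
    ES.IsEmbedding (tagC (encSet x)) E2 (esSeq E1 E2) where
  injective := tagC_injective _
  mem_iff a := by
    refine ⟨fun h => ?_, fun ha => Or.inr ⟨x, hx, a, ha, rfl⟩⟩
    rcases h with ⟨_, _, h⟩ | ⟨_, _, b, hb, h⟩
    · simp at h
    · rwa [(tagC_inj.1 h).2]
  le_iff a ha b hb := by
    refine ⟨fun h => ?_, fun h => Or.inr (Or.inl ⟨x, hx, a, ha, b, hb, h, rfl, rfl⟩)⟩
    rcases h with ⟨_, _, _, _, _, h, _⟩ | ⟨_, _, _, _, _, _, h, h', h''⟩ |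
      ⟨_, _, _, _, _, _, _, h, _⟩
    · simp at h
    · rwa [(tagC_inj.1 h').2, (tagC_inj.1 h'').2]
    · simp at h
  conf a ha b hb h := Or.inr (Or.inl ⟨x, hx, a, ha, b, hb, h, rfl, rfl⟩)
  lbl_eq a := by simp [esSeq, tagC]

lemma seq_le_tagL {u a : ℕ} (h : (esSeq E1 E2).le u (tagL a)) : u ∈ Set.range tagL := by
  rcases h with ⟨c, _, _, _, _, rfl, _⟩ | ⟨_, _, _, _, _, _, _, _, h'⟩ |
    ⟨_, _, _, _, _, _, _, _, h'⟩
  · exact ⟨c, rfl⟩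
  · simp at h'
  · simp at h'

lemma seq_tagC_le {u k a : ℕ} (h : (esSeq E1 E2).le (tagC k a) u) :
    u ∈ Set.range (tagC k) := by
  rcases h with ⟨_, _, _, _, _, h', _⟩ | ⟨_, _, _, _, c, _, _, h', rfl⟩ |
    ⟨_, _, _, _, _, _, _, h', _⟩
  · simp at h'
  · exact ⟨c, by rw [(tagC_inj.1 h').1]⟩
  · simp at h'

lemma seq_le_tagC {u k a : ℕ} (h : (esSeq E1 E2).le u (tagC k a)) :
    u ∈ Set.range tagL ∪ Set.range (tagC k) := by
  rcases h with ⟨_, _, _, _, _, _, h'⟩ | ⟨_, _, c, _, _, _, _, rfl, h'⟩ |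
    ⟨_, _, c, _, _, _, _, rfl, _⟩
  · simp at h'
  · exact Or.inr ⟨c, by rw [(tagC_inj.1 h').1]⟩
  · exact Or.inl ⟨c, rfl⟩

lemma finite_seq (h1 : E1.ev.Finite) (h2 : E2.ev.Finite) : (esSeq E1 E2).ev.Finite := by
  refine (h1.image tagL).union (((ES.maxC_finite h1).biUnion fun x _ =>
    h2.image (tagC (encSet x))).subset ?_)
  rintro _ ⟨x, hx, a, ha, rfl⟩
  exact Set.mem_biUnion hx ⟨a, ha, rfl⟩

/-- The rank of a copy of `E2` is shifted above every rank of `E1`. -/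
lemma hasRank_seq (hfin : E1.ev.Finite) (h1 : E1.HasRank) (h2 : E2.HasRank) :
    (esSeq E1 E2).HasRank := by
  obtain ⟨r1, hr1⟩ := h1
  obtain ⟨r2, hr2⟩ := h2
  obtain ⟨N, hN⟩ := (hfin.image r1).bddAbove
  refine ⟨fun u => if (Nat.unpair u).1 = 0 then r1 (Nat.unpair u).2
    else N + 1 + r2 (Nat.unpair (Nat.unpair u).2).2, ?_⟩
  rintro _ _ _ _ (⟨a, ha, b, hb, hab, rfl, rfl⟩ | ⟨x, -, a, ha, b, hb, hab, rfl, rfl⟩ |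
    ⟨x, hx, a, ha, b, -, -, rfl, rfl⟩) hne
  · simpa [tagL] using hr1 a ha b hb hab (by rintro rfl; exact hne rfl)
  · simpa [tagC] using hr2 a ha b hb hab (by rintro rfl; exact hne rfl)
  · have : r1 a ≤ N := hN ⟨a, hx.1.1 ha, rfl⟩
    simp only [tagL, tagC, Nat.unpair_pair, ↓reduceIte, one_ne_zero]
    omega

lemma seq_config_of_maxC (hfin : E1.ev.Finite) (hy : y ∈ E1.MaxC) (hz : E2.Config z) :
    (esSeq E1 E2).Config (tagL '' y ∪ tagC (encSet y) '' z) := by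
  have hleft : ∀ {a}, tagL a ∈ tagL '' y ∪ tagC (encSet y) '' z → a ∈ y := by
    rintro a (⟨b, hb, h⟩ | ⟨_, _, h⟩)
    · rwa [← tagL_inj.1 h]
    · simp at h
  have hcopy : ∀ {x' a}, x' ∈ E1.MaxC → tagC (encSet x') a ∈ tagL '' y ∪ tagC (encSet y) '' z →
      x' = y ∧ a ∈ z := by
    rintro x' a hx' (⟨_, _, h⟩ | ⟨b, hb, h⟩)
    · simp at h
    · obtain ⟨hk, rfl⟩ := tagC_inj.1 h
      exact ⟨ES.encSet_injOn_maxC hfin hx' hy hk.symm, hb⟩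
  refine ⟨Set.union_subset (isEmbedding_seq_inl.image_subset_ev hy.1.1)
    ((isEmbedding_seq_copy hy).image_subset_ev hz.1), ?_, ?_⟩
  · rintro _ hu _ _ (⟨a, ha, b, _, hab, rfl, rfl⟩ | ⟨x', hx', a, ha, b, _, hab, rfl, rfl⟩ |
      ⟨x', hx', a, ha, b, _, _, rfl, rfl⟩)
    · exact Or.inl ⟨a, hy.1.2.1 b (hleft hu) a ha hab, rfl⟩
    · obtain ⟨rfl, hb⟩ := hcopy hx' hu
      exact Or.inr ⟨a, hz.2.1 b hb a ha hab, rfl⟩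
    · obtain ⟨rfl, -⟩ := hcopy hx' hu
      exact Or.inl ⟨a, ha, rfl⟩
  · rintro _ hu _ hv (⟨a, _, b, _, hab, rfl, rfl⟩ | ⟨x', hx', a, _, b, _, hab, rfl, rfl⟩ |
      ⟨x', hx', x'', hx'', hne, a, _, b, _, rfl, rfl⟩ |
      ⟨x', hx', a, _, ⟨b, hb, hab⟩, c, _, ⟨rfl, rfl⟩ | ⟨rfl, rfl⟩⟩)
    · exact hy.1.2.2 a (hleft hu) b (hleft hv) hab
    · exact hz.2.2 a (hcopy hx' hu).2 b (hcopy hx' hv).2 hab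
    · exact hne ((hcopy hx' hu).1.trans (hcopy hx'' hv).1.symm)
    · obtain ⟨rfl, -⟩ := hcopy hx' hv
      exact hy.1.2.2 a (hleft hu) b hb hab
    · obtain ⟨rfl, -⟩ := hcopy hx' hu
      exact hy.1.2.2 a (hleft hv) b hb hab

/-- Distinct copies of `E2` are in conflict, and an event of `E1` is in conflict with a copy
whose index it conflicts with; so a configuration meets at most one copy, and the index of that
copy contains its `E1`-part. -/
lemma exists_maxC_cover_seq (hfin : E1.ev.Finite)
    (hsymm : ∀ e ∈ E1.ev, ∀ f ∈ E1.ev, E1.conf e f → E1.conf f e)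
    (hx : (esSeq E1 E2).Config x) :
    ∃ y ∈ E1.MaxC, tagL ⁻¹' x ⊆ y ∧ x ⊆ Set.range tagL ∪ Set.range (tagC (encSet y)) := by
  have hxL := isEmbedding_seq_inl.config_preimage hx
  by_cases hcopy : ∃ y ∈ E1.MaxC, ∃ f ∈ E2.ev, tagC (encSet y) f ∈ x
  · obtain ⟨y, hy, f, hf, hfx⟩ := hcopy
    have hcross : ∀ a ∈ tagL ⁻¹' x, ∀ b ∈ y, ¬ E1.conf a b := fun a ha b hb hab =>
      hx.2.2 _ ha _ hfx (Or.inr (Or.inr (Or.inr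
        ⟨y, hy, a, hxL.1 ha, ⟨b, hb, hab⟩, f, hf, Or.inl ⟨rfl, rfl⟩⟩)))
    have hunion := hy.2 _ (hxL.union hy.1 fun a ha b hb =>
      ⟨hcross a ha b hb, fun hba => hcross a ha b hb (hsymm b (hy.1.1 hb) a (hxL.1 ha) hba)⟩)
      Set.subset_union_right
    refine ⟨y, hy, Set.union_eq_right.1 hunion, fun u hu => ?_⟩
    rcases hx.1 hu with ⟨a, -, rfl⟩ | ⟨y', hy', a, ha, rfl⟩
    · exact Or.inl ⟨a, rfl⟩
    · obtain rfl : y' = y := by_contra fun hne =>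
        hx.2.2 _ hu _ hfx (Or.inr (Or.inr (Or.inl ⟨y', hy', y, hy, hne, a, ha, f, hf, rfl, rfl⟩)))
      exact Or.inr ⟨a, rfl⟩
  · obtain ⟨y, hy, hxy⟩ := ES.exists_maxC hfin hxL
    refine ⟨y, hy, hxy, fun u hu => ?_⟩
    rcases hx.1 hu with ⟨a, -, rfl⟩ | ⟨y', hy', a, ha, rfl⟩
    · exact Or.inl ⟨a, rfl⟩
    · exact absurd ⟨y', hy', a, ha, hu⟩ hcopy

lemma maxC_seq (hfin : E1.ev.Finite)
    (hsymm : ∀ e ∈ E1.ev, ∀ f ∈ E1.ev, E1.conf e f → E1.conf f e)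
    (hx : x ∈ (esSeq E1 E2).MaxC) :
    tagL ⁻¹' x ∈ E1.MaxC ∧ tagC (encSet (tagL ⁻¹' x)) ⁻¹' x ∈ E2.MaxC := by
  obtain ⟨y, hy, hxy, hcover⟩ := exists_maxC_cover_seq hfin hsymm hx.1
  have hcopy := isEmbedding_seq_copy (E2 := E2) hy
  have hxeq : x = tagL '' (tagL ⁻¹' x) ∪ tagC (encSet y) '' (tagC (encSet y) ⁻¹' x) := by
    rw [Set.image_preimage_eq_inter_range, Set.image_preimage_eq_inter_range,
      ← Set.inter_union_distrib_left, Set.inter_eq_left.2 hcover]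
  have hyx : tagL ⁻¹' x = y := by
    have hX := hx.2 _ (seq_config_of_maxC hfin hy (hcopy.config_preimage hx.1))
      (hxeq.trans_subset (Set.union_subset_union_left _ (Set.image_mono hxy)))
    rw [← hX, Set.preimage_union, tagL_injective.preimage_image, preimage_tagL_image_tagC,
      Set.union_empty]
  rw [hyx]
  refine ⟨hy, hcopy.maxC_preimage hx fun z hz hxz => ?_⟩
  rw [hxeq, hyx, Set.union_assoc, ← Set.image_union, Set.union_eq_right.2 hxz]
  exact seq_config_of_maxC hfin hy hz

lemma minLblP_seq_of_forall_maxC {B : P}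
    (hB : ∀ x ∈ E1.MaxC, ∃ e ∈ x, (E1.lbl e).sbj = B) :
    minLblP (esSeq E1 E2) B = minLblP E1 B := by
  let E := esSeq E1 E2
  have ht : E.projC E.ev B ⊆ E.ev := Set.sep_subset _ _
  have hcover : E.minIn (E.projC E.ev B) ⊆ Set.range tagL := by
    rintro u ⟨⟨hu, hsbj⟩, hmin⟩
    rcases hu with ⟨a, -, rfl⟩ | ⟨x, hx, a, ha, rfl⟩
    · exact ⟨a, rfl⟩
    · obtain ⟨e, he, heB⟩ := hB x hx
      rw [(isEmbedding_seq_copy hx).lbl_eq] at hsbj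
      have hle : E.le (tagL e) (tagC (encSet x) a) :=
        Or.inr (Or.inr ⟨x, hx, e, he, a, ha, heB.trans hsbj.symm, rfl, rfl⟩)
      have heB' : (E.lbl (tagL e)).sbj = B := by rwa [isEmbedding_seq_inl.lbl_eq]
      exact absurd (hmin _ ⟨Or.inl ⟨e, hx.1.1 he, rfl⟩, heB'⟩ hle) tagL_ne_tagC
  rw [minLblP_eq, minLblP_eq, ← Set.inter_eq_left.2 hcover,
    isEmbedding_seq_inl.image_minIn_inter_range ht fun _ _ _ => seq_le_tagL,
    isEmbedding_seq_inl.preimage_projC_ev]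

lemma minLblP_seq_of_forall_ne {B : P} (hfin : E1.ev.Finite)
    (hB : ∀ e ∈ E1.ev, (E1.lbl e).sbj ≠ B) :
    minLblP (esSeq E1 E2) B = minLblP E2 B := by
  let E := esSeq E1 E2
  have ht : E.projC E.ev B ⊆ E.ev := Set.sep_subset _ _
  have hcopy : ∀ x ∈ E1.MaxC, E.lbl '' (E.minIn (E.projC E.ev B) ∩ Set.range (tagC (encSet x)))
      = minLblP E2 B := by
    intro x hx
    have hx' := isEmbedding_seq_copy (E2 := E2) hx
    rw [minLblP_eq, ← hx'.preimage_projC_ev]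
    refine hx'.image_minIn_inter_range ht fun a u ⟨hu, hsbj⟩ hle => ?_
    rcases seq_le_tagC hle with ⟨c, rfl⟩ | h
    · rw [isEmbedding_seq_inl.lbl_eq] at hsbj
      exact absurd hsbj (hB c ((isEmbedding_seq_inl.mem_iff c).1 hu))
    · exact h
  rw [minLblP_eq]
  ext l
  constructor
  · rintro ⟨u, hu, rfl⟩
    rcases hu.1.1 with ⟨a, ha, rfl⟩ | ⟨x, hx, a, -, rfl⟩
    · exact absurd (isEmbedding_seq_inl.lbl_eq a ▸ hu.1.2) (hB a ha)
    · rw [← hcopy x hx]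
      exact ⟨_, ⟨hu, a, rfl⟩, rfl⟩
  · intro hl
    obtain ⟨x, hx⟩ := ES.maxC_nonempty hfin
    rw [← hcopy x hx] at hl
    exact Set.image_mono Set.inter_subset_left hl

end Seq

structure Realizes (Γ : Set P) (φ Λ : Set (Label P M)) (E : ES P M) : Prop where
  finite : E.ev.Finite
  hasRank : E.HasRank
  conf_symm : ∀ e ∈ E.ev, ∀ f ∈ E.ev, E.conf e f → E.conf f e
  sbj_mem : ∀ e ∈ E.ev, (E.lbl e).sbj ∈ Γ
  minLbl_subset : E.minLbl ⊆ Lout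
  minLblP_eq_hat : ∀ B, minLblP E B = hat φ B
  maxC_proj : ∀ x ∈ E.MaxC, ∀ B ∈ Γ, ∃ e ∈ E.maxIn (E.projC x B), E.lbl e ∈ Λ

namespace Realizes

variable {Γ : Set P} {φ Λ : Set (Label P M)} {E : ES P M}

lemma mem_of_mem_hat (h : Realizes Γ φ Λ E) {l : Label P M} {B : P} (hl : l ∈ hat φ B) :
    B ∈ Γ := by
  rw [← h.minLblP_eq_hat, minLblP_eq] at hl
  obtain ⟨e, ⟨⟨he, rfl⟩, -⟩, -⟩ := hl
  exact h.sbj_mem e he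

lemma hat_eq_empty (h : Realizes Γ φ Λ E) {B : P} (hB : B ∉ Γ) : hat φ B = ∅ :=
  Set.eq_empty_of_forall_notMem fun _ hl => hB (h.mem_of_mem_hat hl)

lemma sbjSet_minLbl {A : P} (h : Realizes Γ φ Λ E) (hA : sbjSet (φ ∩ Lout) = {A}) :
    sbjSet E.minLbl = {A} := by
  have hsub : sbjSet E.minLbl ⊆ {A} := by
    rintro _ ⟨_, ⟨e, he, rfl⟩, rfl⟩
    have hφ : E.lbl e ∈ hat φ (E.lbl e).sbj := by
      rw [← h.minLblP_eq_hat, minLblP_eq]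
      exact ⟨e, ES.mem_minIn_of_subset (Set.sep_subset _ _) ⟨he.1, rfl⟩ he, rfl⟩
    exact hA ▸ ⟨_, ⟨hφ.1, h.minLbl_subset ⟨e, he, rfl⟩⟩, rfl⟩
  obtain ⟨l, ⟨hlφ, -⟩, rfl⟩ : A ∈ sbjSet (φ ∩ Lout) := hA ▸ rfl
  obtain ⟨e, he, -⟩ : l ∈ minLblP E l.sbj := by
    rw [h.minLblP_eq_hat]
    exact ⟨hlφ, rfl⟩
  obtain ⟨e', he'⟩ := ES.minIn_nonempty h.finite h.hasRank subset_rfl ⟨e, he.1.1⟩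
  have hmem : (E.lbl e').sbj ∈ sbjSet E.minLbl := ⟨_, ⟨e', he', rfl⟩, rfl⟩
  exact hsub.antisymm (Set.singleton_subset_iff.2 (hsub hmem ▸ hmem))

end Realizes

lemma realizes_empty [Nonempty P] [Nonempty M] : Realizes ∅ ∅ ∅ (esEmpty : ES P M) where
  finite := Set.finite_empty
  hasRank := ⟨id, by simp [esEmpty]⟩
  conf_symm := by simp [esEmpty]
  sbj_mem := by simp [esEmpty]
  minLbl_subset := by simp [ES.minLbl, ES.minEv, ES.minIn, esEmpty]
  minLblP_eq_hat B := by simp [minLblP_eq, ES.minIn, ES.projC, esEmpty, hat]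
  maxC_proj := by simp

section Act

variable {a b : P} {m : M}

lemma esAct_projC_subsingleton (hab : a ≠ b) (C : P) :
    ((esAct a b m).projC (esAct a b m).ev C).Subsingleton := by
  rintro e ⟨he, rfl⟩ f ⟨hf, hfe⟩
  rcases he with rfl | rfl <;> rcases hf with rfl | rfl <;> simp_all [esAct, Label.sbj, eq_comm]

lemma maxC_esAct {x : Set ℕ} (hx : x ∈ (esAct a b m).MaxC) : x = (esAct a b m).ev :=
  (hx.2 _ ⟨subset_rfl, fun _ _ _ hf _ => hf, fun _ _ _ _ h => h⟩ hx.1.1).symm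

lemma lblSet_esAct : (esAct a b m).lblSet = {Label.out a b m, Label.inp a b m} := by
  simp [ES.lblSet, esAct, Set.image_insert_eq]

lemma realizes_act (hab : a ≠ b) :
    Realizes {a, b} {Label.out a b m, Label.inp a b m} {Label.out a b m, Label.inp a b m}
      (esAct a b m) where
  finite := (Set.finite_singleton 1).insert 0
  hasRank := ⟨id, by rintro _ _ _ _ (⟨rfl, rfl⟩ | ⟨rfl, rfl⟩ | ⟨rfl, rfl⟩) h <;> simp_all⟩
  conf_symm _ _ _ _ h := h
  sbj_mem := by rintro e (rfl | rfl) <;> simp [esAct, Label.sbj]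
  minLbl_subset := by
    rintro _ ⟨e, ⟨rfl | rfl, hmin⟩, rfl⟩
    · exact ⟨a, b, m, hab, by simp [esAct]⟩
    · exact absurd (hmin 0 (Or.inl rfl) (Or.inr (Or.inl ⟨rfl, rfl⟩))) zero_ne_one
  minLblP_eq_hat C := by
    rw [minLblP_eq, ES.minIn_eq_self (esAct_projC_subsingleton hab C), lbl_image_projC]
    exact congrArg (hat · C) lblSet_esAct
  maxC_proj x hx C hC := by
    rw [maxC_esAct hx, ES.maxIn_eq_self (esAct_projC_subsingleton hab C)]
    rcases hC with rfl | rfl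
    · exact ⟨0, ⟨Or.inl rfl, by simp [esAct, Label.sbj]⟩, by simp [esAct]⟩
    · exact ⟨1, ⟨Or.inr rfl, by simp [esAct, Label.sbj]⟩, by simp [esAct]⟩

end Act

section Constructions

variable {E1 E2 : ES P M} {Γ Γ1 Γ2 : Set P} {φ1 φ2 Λ1 Λ2 : Set (Label P M)}

lemma realizes_tensor (h1 : Realizes Γ1 φ1 Λ1 E1) (h2 : Realizes Γ2 φ2 Λ2 E2) :
    Realizes (Γ1 ∪ Γ2) (φ1 ∪ φ2) (Λ1 ∪ Λ2) (esTensor E1 E2) where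
  finite := finite_tensor h1.finite h2.finite
  hasRank := hasRank_tensor h1.hasRank h2.hasRank
  conf_symm := by
    rintro _ - _ - (⟨a, ha, b, hb, hab, rfl, rfl⟩ | ⟨a, ha, b, hb, hab, rfl, rfl⟩)
    · exact Or.inl ⟨b, hb, a, ha, h1.conf_symm a ha b hb hab, rfl, rfl⟩
    · exact Or.inr ⟨b, hb, a, ha, h2.conf_symm a ha b hb hab, rfl, rfl⟩
  sbj_mem := by
    rintro _ (⟨a, ha, rfl⟩ | ⟨a, ha, rfl⟩)
    · exact isEmbedding_tensor_inl.lbl_eq a ▸ Or.inl (h1.sbj_mem a ha)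
    · exact isEmbedding_tensor_inr.lbl_eq a ▸ Or.inr (h2.sbj_mem a ha)
  minLbl_subset := by
    rintro _ ⟨_, hu, rfl⟩
    rcases hu.1 with ⟨a, -, rfl⟩ | ⟨a, -, rfl⟩
    · exact h1.minLbl_subset (isEmbedding_tensor_inl.lbl_mem_minLbl hu)
    · exact h2.minLbl_subset (isEmbedding_tensor_inr.lbl_mem_minLbl hu)
  minLblP_eq_hat B := by rw [minLblP_tensor, h1.minLblP_eq_hat, h2.minLblP_eq_hat, hat_union]
  maxC_proj x hx B hB := by
    rcases hB with hB | hB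
    · refine isEmbedding_tensor_inl.exists_lbl_mem_maxIn_projC hx.1.1
        (fun _ _ _ h => tensor_tagL_le h) ?_
      obtain ⟨a, ha, hl⟩ := h1.maxC_proj _ (maxC_tensor hx).1 B hB
      exact ⟨a, ha, Or.inl hl⟩
    · refine isEmbedding_tensor_inr.exists_lbl_mem_maxIn_projC hx.1.1
        (fun _ _ _ h => tensor_tagR_le h) ?_
      obtain ⟨a, ha, hl⟩ := h2.maxC_proj _ (maxC_tensor hx).2 B hB
      exact ⟨a, ha, Or.inr hl⟩

lemma realizes_sum (h1 : Realizes Γ φ1 Λ1 E1) (h2 : Realizes Γ φ2 Λ2 E2) :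
    Realizes Γ (φ1 ∪ φ2) (Λ1 ∪ Λ2) (esSum E1 E2) where
  finite := finite_tensor h1.finite h2.finite
  hasRank := hasRank_tensor h1.hasRank h2.hasRank
  conf_symm := by
    rintro _ - _ - ((⟨a, ha, b, hb, hab, rfl, rfl⟩ | ⟨a, ha, b, hb, hab, rfl, rfl⟩) |
      ⟨a, ha, b, hb, ⟨rfl, rfl⟩ | ⟨rfl, rfl⟩⟩)
    · exact Or.inl (Or.inl ⟨b, hb, a, ha, h1.conf_symm a ha b hb hab, rfl, rfl⟩)
    · exact Or.inl (Or.inr ⟨b, hb, a, ha, h2.conf_symm a ha b hb hab, rfl, rfl⟩)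
    · exact Or.inr ⟨a, ha, b, hb, Or.inr ⟨rfl, rfl⟩⟩
    · exact Or.inr ⟨a, ha, b, hb, Or.inl ⟨rfl, rfl⟩⟩
  sbj_mem := by
    rintro _ (⟨a, ha, rfl⟩ | ⟨a, ha, rfl⟩)
    · exact isEmbedding_sum_inl.lbl_eq a ▸ h1.sbj_mem a ha
    · exact isEmbedding_sum_inr.lbl_eq a ▸ h2.sbj_mem a ha
  minLbl_subset := by
    rintro _ ⟨_, hu, rfl⟩
    rcases hu.1 with ⟨a, -, rfl⟩ | ⟨a, -, rfl⟩
    · exact h1.minLbl_subset (isEmbedding_sum_inl.lbl_mem_minLbl hu)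
    · exact h2.minLbl_subset (isEmbedding_sum_inr.lbl_mem_minLbl hu)
  minLblP_eq_hat B := by
    rw [show minLblP (esSum E1 E2) B = minLblP (esTensor E1 E2) B from rfl, minLblP_tensor,
      h1.minLblP_eq_hat, h2.minLblP_eq_hat, hat_union]
  maxC_proj x hx B hB := by
    rcases maxC_sum hx with hy | hz
    · refine isEmbedding_sum_inl.exists_lbl_mem_maxIn_projC hx.1.1
        (fun _ _ _ h => tensor_tagL_le h) ?_
      obtain ⟨a, ha, hl⟩ := h1.maxC_proj _ hy B hB
      exact ⟨a, ha, Or.inl hl⟩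
    · refine isEmbedding_sum_inr.exists_lbl_mem_maxIn_projC hx.1.1
        (fun _ _ _ h => tensor_tagR_le h) ?_
      obtain ⟨a, ha, hl⟩ := h2.maxC_proj _ hz B hB
      exact ⟨a, ha, Or.inr hl⟩

lemma wb_of_compch (h1 : Realizes Γ φ1 Λ1 E1) (h2 : Realizes Γ φ2 Λ2 E2)
    (hc : compch φ1 φ2 Γ) : wb E1 E2 := by
  have hactive : ∀ B, active E1 E2 B ↔
      outUniform (hat φ1 B) (hat φ2 B) ∧ hat φ1 B ≠ ∅ ∧ hat φ2 B ≠ ∅ := by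
    intro B
    simp only [active, outUniform, h1.minLblP_eq_hat, h2.minLblP_eq_hat]
    tauto
  have hΓ : ∀ B, active E1 E2 B → B ∈ Γ := fun B hB =>
    let ⟨_, hl⟩ := Set.nonempty_iff_ne_empty.2 ((hactive B).1 hB).2.1
    h1.mem_of_mem_hat hl
  obtain ⟨A, -, hA, huniq, hpass⟩ := hc
  refine ⟨A, (hactive A).2 hA, fun B hB => huniq B (hΓ B hB) ((hactive B).1 hB), fun B hBA => ?_⟩
  simp only [passive, h1.minLblP_eq_hat, h2.minLblP_eq_hat]
  by_cases hB : B ∈ Γ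
  · obtain ⟨⟨hd, hin⟩, hiff⟩ := hpass B hB hBA
    exact ⟨hd, hin, hiff⟩
  · simp [h1.hat_eq_empty hB, h2.hat_eq_empty hB]

lemma realizes_seq (h1 : Realizes Γ1 φ1 Λ1 E1) (h2 : Realizes Γ2 φ2 Λ2 E2) :
    Realizes (Γ1 ∪ Γ2) (φ1 ∪ lminus φ2 Γ1) (Λ2 ∪ lminus Λ1 Γ2) (esSeq E1 E2) where
  finite := finite_seq h1.finite h2.finite
  hasRank := hasRank_seq h1.finite h1.hasRank h2.hasRank
  conf_symm := by
    rintro _ - _ - (⟨a, ha, b, hb, hab, rfl, rfl⟩ | ⟨x, hx, a, ha, b, hb, hab, rfl, rfl⟩ |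
      ⟨x, hx, x', hx', hne, a, ha, b, hb, rfl, rfl⟩ |
      ⟨x, hx, a, ha, hconf, c, hc, ⟨rfl, rfl⟩ | ⟨rfl, rfl⟩⟩)
    · exact Or.inl ⟨b, hb, a, ha, h1.conf_symm a ha b hb hab, rfl, rfl⟩
    · exact Or.inr (Or.inl ⟨x, hx, b, hb, a, ha, h2.conf_symm a ha b hb hab, rfl, rfl⟩)
    · exact Or.inr (Or.inr (Or.inl ⟨x', hx', x, hx, hne.symm, b, hb, a, ha, rfl, rfl⟩))
    · exact Or.inr (Or.inr (Or.inr ⟨x, hx, a, ha, hconf, c, hc, Or.inr ⟨rfl, rfl⟩⟩))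
    · exact Or.inr (Or.inr (Or.inr ⟨x, hx, a, ha, hconf, c, hc, Or.inl ⟨rfl, rfl⟩⟩))
  sbj_mem := by
    rintro _ (⟨a, ha, rfl⟩ | ⟨x, hx, a, ha, rfl⟩)
    · exact isEmbedding_seq_inl.lbl_eq a ▸ Or.inl (h1.sbj_mem a ha)
    · exact (isEmbedding_seq_copy hx).lbl_eq a ▸ Or.inr (h2.sbj_mem a ha)
  minLbl_subset := by
    rintro _ ⟨_, hu, rfl⟩
    rcases hu.1 with ⟨a, -, rfl⟩ | ⟨x, hx, a, -, rfl⟩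
    · exact h1.minLbl_subset (isEmbedding_seq_inl.lbl_mem_minLbl hu)
    · exact h2.minLbl_subset ((isEmbedding_seq_copy hx).lbl_mem_minLbl hu)
  minLblP_eq_hat B := by
    rw [hat_union]
    by_cases hB : B ∈ Γ1
    · have hmaxC : ∀ x ∈ E1.MaxC, ∃ e ∈ x, (E1.lbl e).sbj = B := fun x hx =>
        let ⟨e, he, _⟩ := h1.maxC_proj x hx B hB
        ⟨e, he.1.1, he.1.2⟩
      rw [minLblP_seq_of_forall_maxC hmaxC, h1.minLblP_eq_hat, hat_lminus_of_mem hB,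
        Set.union_empty]
    · rw [minLblP_seq_of_forall_ne h1.finite fun e he hs => hB (hs ▸ h1.sbj_mem e he :),
        h2.minLblP_eq_hat, h1.hat_eq_empty hB, hat_lminus_of_notMem hB, Set.empty_union]
  maxC_proj x hx B hB := by
    obtain ⟨hy, hz⟩ := maxC_seq h1.finite h1.conf_symm hx
    by_cases hB2 : B ∈ Γ2
    · refine (isEmbedding_seq_copy hy).exists_lbl_mem_maxIn_projC hx.1.1
        (fun _ _ _ h => seq_tagC_le h) ?_
      obtain ⟨a, ha, hl⟩ := h2.maxC_proj _ hz B hB2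
      exact ⟨a, ha, Or.inl hl⟩
    · refine isEmbedding_seq_inl.exists_lbl_mem_maxIn_projC hx.1.1 ?_ ?_
      · rintro - u ⟨hu, hsbj⟩ -
        rcases hx.1.1 hu with ⟨c, -, rfl⟩ | ⟨y, hy', a, ha, rfl⟩
        · exact ⟨c, rfl⟩
        · rw [(isEmbedding_seq_copy hy').lbl_eq] at hsbj
          exact absurd (hsbj ▸ h2.sbj_mem a ha) hB2
      obtain ⟨a, ha, hl⟩ := h1.maxC_proj _ hy B (hB.resolve_right hB2)
      exact ⟨a, ha, Or.inr ⟨hl, ha.1.2 ▸ hB2⟩⟩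

end Constructions

lemma Typing.exists_realizes [Nonempty P] [Nonempty M] {Γ : Set P} {g : GC P M}
    {φ Λ : Set (Label P M)} (h : Typing Γ g φ Λ) : ∃ E, gsem g = some E ∧ Realizes Γ φ Λ E := by
  induction h with
  | temp => exact ⟨esEmpty, rfl, realizes_empty⟩
  | tint hab => exact ⟨_, by simp [gsem, hab], realizes_act hab⟩
  | tseq _ _ ih1 ih2 =>
    obtain ⟨E1, hg1, h1⟩ := ih1
    obtain ⟨E2, hg2, h2⟩ := ih2
    exact ⟨_, by simp [gsem, hg1, hg2], realizes_seq h1 h2⟩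
  | tpar _ _ hdisj ih1 ih2 =>
    obtain ⟨E1, hg1, h1⟩ := ih1
    obtain ⟨E2, hg2, h2⟩ := ih2
    have hlbl : Disjoint E1.lblSet E2.lblSet := Set.disjoint_left.2 fun
      | _, ⟨e, he, rfl⟩, ⟨f, hf, hfe⟩ =>
        (Set.eq_empty_iff_forall_notMem.1 hdisj) _ ⟨h1.sbj_mem e he, hfe ▸ h2.sbj_mem f hf⟩
    exact ⟨_, by simp [gsem, hg1, hg2, hlbl], realizes_tensor h1 h2⟩
  | tch _ _ hc ih1 ih2 =>
    obtain ⟨E1, hg1, h1⟩ := ih1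
    obtain ⟨E2, hg2, h2⟩ := ih2
    exact ⟨_, by simp [gsem, hg1, hg2, wb_of_compch h1 h2 hc], realizes_sum h1 h2⟩

lemma Typing.sender_mem_parts {Γ : Set P} {g : GC P M} {φ Λ : Set (Label P M)}
    (h : Typing Γ g φ Λ) {a b : P} {m : M} (hl : Label.inp a b m ∈ Λ) : a ∈ parts g := by
  induction h with
  | temp => exact absurd hl (Set.notMem_empty _)
  | tint =>
    obtain h | h := hl
    · cases h
    · cases h
      exact Or.inl rfl
  | tseq _ _ ih1 ih2 => exact hl.elim (fun h => Or.inr (ih2 h)) fun h => Or.inl (ih1 h.1)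
  | tpar _ _ _ ih1 ih2 => exact hl.elim (fun h => Or.inl (ih1 h)) fun h => Or.inr (ih2 h)
  | tch _ _ _ ih1 ih2 => exact hl.elim (fun h => Or.inl (ih1 h)) fun h => Or.inr (ih2 h)

theorem typing_enforces_refinement_general {P M : Type} [Infinite P] [Infinite M]
    (A : P) (l : List (M × P))
    {Γ : Set P} {φ Λ : Set (Label P M)}
    (h1' : sbjSet Λ = Γ)
    (h2 : sbjSet (φ ∩ Lout) = {A})
    (h3 : ∀ p ∈ l, ∃ C : P, hat Λ p.2 = {Label.inp C p.2 p.1}) :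
    ∀ G : GC P M, Typing Γ G φ Λ → Refines G A l := by
  intro G hT
  obtain ⟨E, hg, hE⟩ := hT.exists_realizes
  refine ⟨E, hg, hE.sbjSet_minLbl h2, fun x hx p hp => ?_⟩
  obtain ⟨C, hC⟩ := h3 p hp
  have hCΛ : Label.inp C p.2 p.1 ∈ hat Λ p.2 := hC ▸ rfl
  obtain ⟨e, he, hl⟩ := hE.maxC_proj x hx p.2 (h1' ▸ ⟨_, hCΛ.1, rfl⟩)
  have hlC : E.lbl e ∈ hat Λ p.2 := ⟨hl, he.1.2⟩
  rw [hC] at hlC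
  exact ⟨C, hT.sender_mem_parts hCΛ.1, e, he, hlC⟩

/-- Typing enforces refinement (Lemma): for a refinable action `A→m1…mn:B1,…,Bn`
(encoded by `A` and the nonempty list `l = [(m1,B1),…,(mn,Bn)]` with pairwise distinct
`Bi`), if `Π`, `φ`, `Λ` satisfy the three t-ref conditions then any ground `G` with
`Π ⊢ G : ⟨φ,Λ⟩` derivable refines the action. -/
theorem typing_enforces_refinement {P M : Type} [Infinite P] [Infinite M]
    (A : P) (l : List (M × P)) (hl : l ≠ []) (hnd : (l.map Prod.snd).Nodup)
    {Γ : Set P} {φ Λ : Set (Label P M)}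
    (h1 : sbjSet φ = Γ) (h1' : sbjSet Λ = Γ)
    (h2 : sbjSet (φ ∩ Lout) = {A})
    (h3 : ∀ p ∈ l, ∃ C : P, hat Λ p.2 = {Label.inp C p.2 p.1}) :
    ∀ G : GC P M, Typing Γ G φ Λ → Refines G A l :=
  typing_enforces_refinement_general A l h1' h2 h3

end Choreo
end

section
/- Incompleteness of the typing system: let A, B, C be pairwise distinct participants and m, m' messages. The ground g-choreography G = (A→B:m) | (A→C:m') is well-formed, i.e. ⟦G⟧ ≠ ⊥, but G is not typable: there exist no Π, φ, Λ such that Π ⊢ G : ⟨φ,Λ⟩ is derivable. -/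
open scoped Classical

namespace Choreo

variable {P M : Type}

/-- Incompleteness of the typing system: `(A→B:m) | (A→C:m')` is well-formed but not
typable (participant `A` occurs on both sides of the parallel). -/
theorem incompleteness {P M : Type} [Infinite P] [Infinite M]
    (A B C : P) (m m' : M) (hAB : A ≠ B) (hAC : A ≠ C) (hBC : B ≠ C) :
    gsem (GC.par (GC.act A B m) (GC.act A C m')) ≠ none ∧
    ¬ ∃ (Γ : Set P) (φ Λ : Set (Label P M)),
        Typing Γ (GC.par (GC.act A B m) (GC.act A C m')) φ Λ := by
  constructor
  · have hlbl : ∀ (a b : P) (mm : M), (esAct a b mm : ES P M).lblSet =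
        {Label.out a b mm, Label.inp a b mm} := by
      intro a b mm
      simp only [ES.lblSet, esAct, Set.image_insert_eq, Set.image_singleton]
      norm_num
    have hdisj : Disjoint (esAct A B m : ES P M).lblSet (esAct A C m').lblSet := by
      rw [hlbl, hlbl, Set.disjoint_iff]
      rintro l ⟨h1, h2⟩
      simp only [Set.mem_insert_iff, Set.mem_singleton_iff] at h1 h2
      rcases h1 with h1 | h1 <;> rcases h2 with h2 | h2 <;>
        subst h1 <;> simp_all
    simp [gsem, hAB, hAC, hdisj]
  · rintro ⟨Γ, φ, Λ, h⟩
    cases h with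
    | tpar h1 h2 hint =>
      cases h1; cases h2
      have : A ∈ ({A, B} : Set P) ∩ {A, C} := by simp
      rw [hint] at this
      exact this

end Choreo
end
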